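/- arXiv:1809.06051 — 2 statements merged into one kernel-verified Lean document; each statement's English description precedes it below -/
import Mathlib

section
/- Let (W,ω) be a fusion frame for H and (V,υ) a Bessel fusion sequence. The following are equivalent: (1) (V,υ) is a fusion frame dual of (W,ω); (2) there exists a (V,W)-admissible sequence {Q_i}_{i∈I} such that {υ_iQ_i*}_{i∈I} is an operator-valued Bessel sequence and the operator x ↦ Σ_i υ_iω_iQ_iP_{W_i}x is invertible on H; (3) there exist an operator-valued Bessel sequence L = {L_i}_{i∈I} ⊂ B(H) with Σ_i ω_iL_i*P_{W_i}x = 0 for all x ∈ H, and an invertible operator U ∈ B(H), such that the operators A_i := (ω_i U S_{W,ω}^{-1} + L_i*)P_{W_i} satisfy ran(A_i) ⊆ V_i for all i ∈ I, and ‖A_i‖ = υ_i for all i ∉ I₀(V,W). -/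
noncomputable section

open ContinuousLinearMap

/-! For an admissible `Q`, `ran Q_i ⊆ V_i` gives `P_{V_i} Q_i = Q_i`, so the operator of (1) is
`x ↦ Σ υ_i ω_i Q_i P_{W_i} x`; and `‖Q_i‖ ≤ 1` bounds `‖υ_i Q_i* x‖` by `υ_i ‖P_{V_i} x‖`, so
`{υ_i Q_i*}` inherits the Bessel property of `(V, υ)`. This gives (1) ⇔ (2).

For (1) ⇔ (3), the reconstruction formula `Σ ω_i² U S⁻¹ P_{W_i} x = U x` shows that
`Σ ω_i A_i x = U x` as soon as `Σ ω_i L_i* P_{W_i} x = 0`. Hence `Q_i = υ_i⁻¹ A_i` is a dual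
sequence with operator `U`; conversely, a dual sequence `Q` with operator `M` is recovered as
`A_i = υ_i Q_i` by taking `U = M` and `L_i = υ_i Q_i* - ω_i P_{W_i} (M S⁻¹)*`, which is Bessel
because `(V, υ)` and `(W, ω)` are. -/

/-- Orthogonal projection onto a closed subspace, as an operator on `H`. -/
def fproj {H : Type*} [NormedAddCommGroup H] [InnerProductSpace ℂ H] [CompleteSpace H]
    (W : Submodule ℂ H) (hW : IsClosed (W : Set H)) : H →L[ℂ] H :=
  haveI : CompleteSpace W := hW.completeSpace_coe
  W.subtypeL.comp (W.orthogonalProjectionOnto)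

/-- A `(V,W)`-admissible sequence of operators: `W_i^⊥ ⊆ ker Q_i`, `ran Q_i ⊆ V_i`, and
`‖Q_i‖ = 1` whenever `i ∉ I₀(V,W)`. -/
def Admissible {H : Type*} [NormedAddCommGroup H] [InnerProductSpace ℂ H] [CompleteSpace H]
    {I : Type*} (V W : I → Submodule ℂ H) (Q : I → H →L[ℂ] H) : Prop :=
  ∀ i, (W i)ᗮ ≤ LinearMap.ker (Q i : H →ₗ[ℂ] H) ∧ LinearMap.range (Q i : H →ₗ[ℂ] H) ≤ V i ∧
    (¬(V i = ⊥ ∨ W i = ⊥) → ‖Q i‖ = 1)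

lemma exists_hasSum_le_of_le {I : Type*} {f g : I → ℝ} (hf : ∀ i, 0 ≤ f i) (hfg : ∀ i, f i ≤ g i)
    {s : ℝ} (hg : HasSum g s) : ∃ t, HasSum f t ∧ t ≤ s :=
  have hsum : Summable f := hg.summable.of_nonneg_of_le hf hfg
  ⟨∑' i, f i, hsum.hasSum, hasSum_le hfg hsum.hasSum hg⟩

section

variable {E I : Type*} [NormedAddCommGroup E] [NormedSpace ℂ E]

def IsBesselSeq (B : I → E →L[ℂ] E) : Prop :=
  ∃ β : ℝ, ∀ x : E, ∃ s : ℝ, HasSum (fun i => ‖B i x‖ ^ 2) s ∧ s ≤ β * ‖x‖ ^ 2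

lemma isBesselSeq_smul_iff (c : I → ℝ) (B : I → E →L[ℂ] E) :
    IsBesselSeq (fun i => c i • B i) ↔
      ∃ β : ℝ, ∀ x : E, ∃ s : ℝ, HasSum (fun i => c i ^ 2 * ‖B i x‖ ^ 2) s ∧ s ≤ β * ‖x‖ ^ 2 := by
  simp only [IsBesselSeq, smul_apply, norm_smul, mul_pow, Real.norm_eq_abs, sq_abs]

lemma IsBesselSeq.of_norm_le {A B : I → E →L[ℂ] E} (hB : IsBesselSeq B)
    (hAB : ∀ i x, ‖A i x‖ ≤ ‖B i x‖) : IsBesselSeq A := by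
  obtain ⟨β, hβ⟩ := hB
  refine ⟨β, fun x => ?_⟩
  obtain ⟨s, hs, hsβ⟩ := hβ x
  obtain ⟨t, ht, hts⟩ := exists_hasSum_le_of_le (fun i => by positivity)
    (fun i => pow_le_pow_left₀ (norm_nonneg _) (hAB i x) 2) hs
  exact ⟨t, ht, hts.trans hsβ⟩

lemma IsBesselSeq.sub {A B : I → E →L[ℂ] E} (hA : IsBesselSeq A) (hB : IsBesselSeq B) :
    IsBesselSeq (fun i => A i - B i) := by
  obtain ⟨α, hα⟩ := hA
  obtain ⟨β, hβ⟩ := hB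
  refine ⟨2 * (α + β), fun x => ?_⟩
  obtain ⟨s, hs, hsα⟩ := hα x
  obtain ⟨t, ht, htβ⟩ := hβ x
  have hle : ∀ i, ‖(A i - B i) x‖ ^ 2 ≤ 2 * (‖A i x‖ ^ 2 + ‖B i x‖ ^ 2) := fun i =>
    (pow_le_pow_left₀ (norm_nonneg _) (norm_sub_le _ _) 2).trans add_sq_le
  obtain ⟨u, hu, hust⟩ := exists_hasSum_le_of_le (fun i => by positivity) hle
    ((hs.add ht).mul_left 2)
  exact ⟨u, hu, by linarith⟩

lemma IsBesselSeq.comp_right {B : I → E →L[ℂ] E} (hB : IsBesselSeq B) (T : E →L[ℂ] E) :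
    IsBesselSeq (fun i => B i ∘L T) := by
  obtain ⟨β, hβ⟩ := hB
  refine ⟨max β 0 * ‖T‖ ^ 2, fun x => ?_⟩
  obtain ⟨s, hs, hsβ⟩ := hβ (T x)
  refine ⟨s, hs, ?_⟩
  calc s ≤ max β 0 * ‖T x‖ ^ 2 := hsβ.trans (by gcongr; exact le_max_left β 0)
    _ ≤ max β 0 * (‖T‖ * ‖x‖) ^ 2 := by gcongr; exact le_opNorm T x
    _ = max β 0 * ‖T‖ ^ 2 * ‖x‖ ^ 2 := by ring

lemma hasSum_smul_comp_inv_apply {c : I → ℝ} {P : I → E →L[ℂ] E} {S Sinv : E →L[ℂ] E}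
    (hS : ∀ x, HasSum (fun i => c i • P i x) (S x)) (hSinv : Sinv ∘L S = 1) (T : E →L[ℂ] E)
    (x : E) : HasSum (fun i => c i • (T ∘L Sinv) (P i x)) (T x) := by
  have h := (hS x).mapL (T ∘L Sinv)
  simp only [map_smul_of_tower] at h
  rwa [comp_apply, ← comp_apply Sinv S, hSinv, one_apply_eq_self] at h

end

section Hilbert

variable {H : Type*} [NormedAddCommGroup H] [InnerProductSpace ℂ H] [CompleteSpace H]

section Projection

variable (W : Submodule ℂ H) (hW : IsClosed (W : Set H))

lemma fproj_apply_mem (x : H) : fproj W hW x ∈ W := by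
  have : CompleteSpace W := hW.completeSpace_coe
  exact W.starProjection_apply_mem x

lemma fproj_apply_of_mem {x : H} (hx : x ∈ W) : fproj W hW x = x := by
  have : CompleteSpace W := hW.completeSpace_coe
  exact Submodule.starProjection_eq_self_iff.2 hx

lemma fproj_apply_of_mem_orthogonal {x : H} (hx : x ∈ Wᗮ) : fproj W hW x = 0 := by
  have : CompleteSpace W := hW.completeSpace_coe
  exact (Submodule.starProjection_apply_eq_zero_iff W).2 hx

lemma sub_fproj_apply_mem_orthogonal (x : H) : x - fproj W hW x ∈ Wᗮ := by
  have : CompleteSpace W := hW.completeSpace_coe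
  exact Submodule.sub_starProjection_mem_orthogonal x

@[simp]
lemma fproj_fproj (x : H) : fproj W hW (fproj W hW x) = fproj W hW x :=
  fproj_apply_of_mem W hW (fproj_apply_mem W hW x)

@[simp]
lemma adjoint_fproj : adjoint (fproj W hW) = fproj W hW := by
  have : CompleteSpace W := hW.completeSpace_coe
  exact (isSelfAdjoint_starProjection W).adjoint_eq

variable {W}

lemma apply_fproj_of_orthogonal_le_ker {Q : H →L[ℂ] H}
    (hker : Wᗮ ≤ LinearMap.ker (Q : H →ₗ[ℂ] H)) (x : H) : Q (fproj W hW x) = Q x := by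
  have h : Q (x - fproj W hW x) = 0 := hker (sub_fproj_apply_mem_orthogonal W hW x)
  rwa [map_sub, sub_eq_zero, eq_comm] at h

lemma fproj_apply_of_range_le {Q : H →L[ℂ] H} (hran : LinearMap.range (Q : H →ₗ[ℂ] H) ≤ W)
    (x : H) : fproj W hW (Q x) = Q x :=
  fproj_apply_of_mem W hW (hran ⟨x, rfl⟩)

lemma norm_adjoint_apply_le_norm_fproj {Q : H →L[ℂ] H}
    (hran : LinearMap.range (Q : H →ₗ[ℂ] H) ≤ W) (hQ : ‖Q‖ ≤ 1) (x : H) :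
    ‖adjoint Q x‖ ≤ ‖fproj W hW x‖ := by
  have hPQ : fproj W hW ∘L Q = Q := ext (fproj_apply_of_range_le hW hran)
  calc ‖adjoint Q x‖ = ‖adjoint Q (fproj W hW x)‖ := by
        conv_lhs => rw [← hPQ, adjoint_comp, adjoint_fproj]
        rfl
    _ ≤ ‖adjoint Q‖ * ‖fproj W hW x‖ := le_opNorm _ _
    _ ≤ ‖fproj W hW x‖ := by
        rw [adjoint.norm_map]
        exact mul_le_of_le_one_left (norm_nonneg _) hQ

end Projection

lemma adjoint_real_smul (r : ℝ) (T : H →L[ℂ] H) : adjoint (r • T) = r • adjoint T := by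
  rw [RCLike.real_smul_eq_coe_smul (K := ℂ) r T, map_smulₛₗ]
  simp

section Dual

variable {I : Type*} {V W : I → Submodule ℂ H}
  (hV : ∀ i, IsClosed (V i : Set H)) (hW : ∀ i, IsClosed (W i : Set H)) (υ ω : I → ℝ)

namespace Admissible

variable {Q : I → H →L[ℂ] H}

lemma apply_fproj (hQ : Admissible V W Q) (i : I) (x : H) : Q i (fproj (W i) (hW i) x) = Q i x :=
  apply_fproj_of_orthogonal_le_ker (hW i) (hQ i).1 x

lemma fproj_apply (hQ : Admissible V W Q) (i : I) (x : H) : fproj (V i) (hV i) (Q i x) = Q i x :=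
  fproj_apply_of_range_le (hV i) (hQ i).2.1 x

lemma norm_le_one (hQ : Admissible V W Q) (i : I) : ‖Q i‖ ≤ 1 := by
  by_cases hi : V i = ⊥ ∨ W i = ⊥
  · suffices Q i = 0 by simp [this]
    ext x
    rcases hi with hVi | hWi
    · simpa [hVi] using (hQ i).2.1 ⟨x, rfl⟩
    · simpa using (hQ i).1 (by simp [hWi] : x ∈ (W i)ᗮ)
  · exact ((hQ i).2.2 hi).le

lemma isBesselSeq_smul_adjoint (hQ : Admissible V W Q)
    (hVB : IsBesselSeq (fun i => υ i • fproj (V i) (hV i))) :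
    IsBesselSeq (fun i => υ i • adjoint (Q i)) :=
  hVB.of_norm_le fun i x => by
    simp only [smul_apply, norm_smul]
    exact mul_le_mul_of_nonneg_left
      (norm_adjoint_apply_le_norm_fproj (hV i) (hQ i).2.1 (hQ.norm_le_one i) x) (norm_nonneg _)

end Admissible

-- The series is `T*_{V,υ} D_Q T_{W,ω} x`.
def IsFusionFrameDual : Prop :=
  ∃ Q : I → H →L[ℂ] H, Admissible V W Q ∧
    ∃ M : H →L[ℂ] H,
      (∀ x : H, HasSum
        (fun i => (υ i * ω i) • fproj (V i) (hV i) ((Q i) (fproj (W i) (hW i) x))) (M x)) ∧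
      ∃ N : H →L[ℂ] H, M ∘L N = 1 ∧ N ∘L M = 1

-- The operator `A_i` of condition (3).
def perturbedDualOp (Sinv U : H →L[ℂ] H) (L : I → H →L[ℂ] H) (i : I) : H →L[ℂ] H :=
  ((ω i • (U ∘L Sinv)) + adjoint (L i)) ∘L fproj (W i) (hW i)

variable {hV hW υ ω}

lemma isFusionFrameDual_iff :
    IsFusionFrameDual hV hW υ ω ↔
      ∃ Q : I → H →L[ℂ] H, Admissible V W Q ∧
        ∃ M : H →L[ℂ] H,
          (∀ x : H, HasSum (fun i => (υ i * ω i) • (Q i) (fproj (W i) (hW i) x)) (M x)) ∧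
          ∃ N : H →L[ℂ] H, M ∘L N = 1 ∧ N ∘L M = 1 := by
  refine exists_congr fun Q => and_congr_right fun hQ => ?_
  simp only [hQ.fproj_apply hV]

theorem isFusionFrameDual_iff_exists_isBesselSeq
    (hVB : IsBesselSeq (fun i => υ i • fproj (V i) (hV i))) :
    IsFusionFrameDual hV hW υ ω ↔
      ∃ Q : I → H →L[ℂ] H, Admissible V W Q ∧ IsBesselSeq (fun i => υ i • adjoint (Q i)) ∧
        ∃ M : H →L[ℂ] H,
          (∀ x : H, HasSum (fun i => (υ i * ω i) • (Q i) (fproj (W i) (hW i) x)) (M x)) ∧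
          ∃ N : H →L[ℂ] H, M ∘L N = 1 ∧ N ∘L M = 1 := by
  rw [isFusionFrameDual_iff]
  refine exists_congr fun Q => and_congr_right fun hQ => ?_
  exact (and_iff_right (hQ.isBesselSeq_smul_adjoint hV υ hVB)).symm

theorem IsFusionFrameDual.exists_perturbation (hυ : ∀ i, 0 ≤ υ i)
    (hVB : IsBesselSeq (fun i => υ i • fproj (V i) (hV i)))
    (hWB : IsBesselSeq (fun i => ω i • fproj (W i) (hW i))) {S Sinv : H →L[ℂ] H}
    (hS : ∀ x : H, HasSum (fun i => (ω i ^ 2) • fproj (W i) (hW i) x) (S x))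
    (hSinv : Sinv ∘L S = 1) (hdual : IsFusionFrameDual hV hW υ ω) :
    ∃ L : I → H →L[ℂ] H, IsBesselSeq L ∧
      (∀ x : H, HasSum (fun i => ω i • adjoint (L i) (fproj (W i) (hW i) x)) (0 : H)) ∧
      ∃ U : H →L[ℂ] H, (∃ Uinv : H →L[ℂ] H, U ∘L Uinv = 1 ∧ Uinv ∘L U = 1) ∧
        (∀ i, LinearMap.range (perturbedDualOp hW ω Sinv U L i : H →ₗ[ℂ] H) ≤ V i) ∧
        (∀ i, ¬(V i = ⊥ ∨ W i = ⊥) → ‖perturbedDualOp hW ω Sinv U L i‖ = υ i) := by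
  obtain ⟨Q, hQ, M, hM, hMinv⟩ := isFusionFrameDual_iff.1 hdual
  -- With `U = M`, this choice of `L` makes `A_i = υ_i Q_i`.
  set L : I → H →L[ℂ] H :=
    fun i => υ i • adjoint (Q i) - (ω i • fproj (W i) (hW i)) ∘L adjoint (M ∘L Sinv)
  have hadjL (i : I) :
      adjoint (L i) = υ i • Q i - (M ∘L Sinv) ∘L (ω i • fproj (W i) (hW i)) := by
    simp only [L, map_sub, adjoint_real_smul, adjoint_comp, adjoint_adjoint, adjoint_fproj]
  have hA (i : I) : perturbedDualOp hW ω Sinv M L i = υ i • Q i := by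
    ext x
    simp only [perturbedDualOp, hadjL, comp_apply, add_apply, sub_apply,
      smul_apply, fproj_fproj, hQ.apply_fproj hW, map_smul_of_tower]
    abel
  refine ⟨L, (hQ.isBesselSeq_smul_adjoint hV υ hVB).sub (hWB.comp_right _), fun x => ?_, M,
    hMinv, fun i => ?_, fun i hi => ?_⟩
  · have h := (hM x).sub (hasSum_smul_comp_inv_apply hS hSinv M x)
    rw [sub_self] at h
    convert h using 2 with i
    simp only [hadjL, comp_apply, sub_apply, smul_apply, fproj_fproj,
      map_smul_of_tower, smul_sub, smul_smul]
    rw [mul_comm (ω i), sq]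
  · rw [hA]
    rintro _ ⟨x, rfl⟩
    exact (V i).smul_of_tower_mem (υ i) ((hQ i).2.1 ⟨x, rfl⟩)
  · rw [hA, norm_smul, Real.norm_of_nonneg (hυ i), (hQ i).2.2 hi, mul_one]

lemma admissible_inv_smul (hυ : ∀ i, υ i = 0 → V i = ⊥) {A : I → H →L[ℂ] H}
    (hker : ∀ i, (W i)ᗮ ≤ LinearMap.ker (A i : H →ₗ[ℂ] H))
    (hran : ∀ i, LinearMap.range (A i : H →ₗ[ℂ] H) ≤ V i)
    (hnorm : ∀ i, ¬(V i = ⊥ ∨ W i = ⊥) → ‖A i‖ = υ i) :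
    Admissible V W (fun i => (υ i)⁻¹ • A i) := by
  refine fun i => ⟨fun x hx => ?_, ?_, fun hi => ?_⟩
  · simp [show A i x = 0 from hker i hx]
  · rintro _ ⟨x, rfl⟩
    exact (V i).smul_of_tower_mem _ (hran i ⟨x, rfl⟩)
  · have hpos : 0 < υ i :=
      (hnorm i hi ▸ norm_nonneg _).lt_of_ne' fun h => hi (Or.inl (hυ i h))
    rw [norm_smul, hnorm i hi, norm_inv, Real.norm_of_nonneg hpos.le, inv_mul_cancel₀ hpos.ne']

theorem isFusionFrameDual_of_perturbation (hυ : ∀ i, υ i = 0 → V i = ⊥) {S Sinv : H →L[ℂ] H}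
    (hS : ∀ x : H, HasSum (fun i => (ω i ^ 2) • fproj (W i) (hW i) x) (S x))
    (hSinv : Sinv ∘L S = 1) {L : I → H →L[ℂ] H}
    (hL : ∀ x : H, HasSum (fun i => ω i • adjoint (L i) (fproj (W i) (hW i) x)) (0 : H))
    {U : H →L[ℂ] H} (hU : ∃ Uinv : H →L[ℂ] H, U ∘L Uinv = 1 ∧ Uinv ∘L U = 1)
    (hran : ∀ i, LinearMap.range (perturbedDualOp hW ω Sinv U L i : H →ₗ[ℂ] H) ≤ V i)
    (hnorm : ∀ i, ¬(V i = ⊥ ∨ W i = ⊥) → ‖perturbedDualOp hW ω Sinv U L i‖ = υ i) :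
    IsFusionFrameDual hV hW υ ω := by
  set A := perturbedDualOp hW ω Sinv U L
  have hA (i : I) (x : H) : A i (fproj (W i) (hW i) x) = A i x := by
    simp only [A, perturbedDualOp, comp_apply, fproj_fproj]
  have hker (i : I) : (W i)ᗮ ≤ LinearMap.ker (A i : H →ₗ[ℂ] H) := fun x hx => by
    simp [A, perturbedDualOp, fproj_apply_of_mem_orthogonal _ _ hx]
  -- `Q_i = υ_i⁻¹ A_i`, which is `0` where `υ_i = 0` since `0⁻¹ = 0`.
  refine isFusionFrameDual_iff.2 ⟨_, admissible_inv_smul hυ hker hran hnorm, U, fun x => ?_, hU⟩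
  have hterm (i : I) : (υ i * ω i) • ((υ i)⁻¹ • A i) (fproj (W i) (hW i) x) =
      ω i ^ 2 • (U ∘L Sinv) (fproj (W i) (hW i) x) + ω i • adjoint (L i) (fproj (W i) (hW i) x) := by
    calc (υ i * ω i) • ((υ i)⁻¹ • A i) (fproj (W i) (hW i) x) = ω i • A i x := by
          rw [smul_apply, hA, smul_smul]
          by_cases h : υ i = 0
          · have : A i x = 0 := by simpa [hυ i h] using hran i ⟨x, rfl⟩
            simp [this]
          · rw [mul_right_comm, mul_inv_cancel₀ h, one_mul]
      _ = _ := by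
          simp only [A, perturbedDualOp, comp_apply, add_apply, smul_apply, smul_add, smul_smul,
            sq]
  simpa only [hterm, add_zero] using (hasSum_smul_comp_inv_apply hS hSinv U x).add (hL x)

end Dual

end Hilbert

theorem fusionFrameDual_tfae_general
    {H : Type*} [NormedAddCommGroup H] [InnerProductSpace ℂ H] [CompleteSpace H]
    {I : Type*}
    (W V : I → Submodule ℂ H)
    (hW : ∀ i, IsClosed ((W i) : Set H)) (hV : ∀ i, IsClosed ((V i) : Set H))
    (ω υ : I → ℝ)
    (hυseq : ∀ i, 0 ≤ υ i ∧ (υ i = 0 ↔ V i = ⊥))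
    -- (W,ω) is a fusion frame
    (αW βW : ℝ)
    (hWframe : ∀ x : H, ∃ s : ℝ,
      HasSum (fun i => ω i ^ 2 * ‖fproj (W i) (hW i) x‖ ^ 2) s ∧
      αW * ‖x‖ ^ 2 ≤ s ∧ s ≤ βW * ‖x‖ ^ 2)
    -- (V,υ) is a Bessel fusion sequence
    (βV : ℝ)
    (hVB : ∀ x : H, ∃ s : ℝ,
      HasSum (fun i => υ i ^ 2 * ‖fproj (V i) (hV i) x‖ ^ 2) s ∧ s ≤ βV * ‖x‖ ^ 2)
    -- the fusion frame operator S_{W,ω} and its inverse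
    (S Sinv : H →L[ℂ] H)
    (hS : ∀ x : H, HasSum (fun i => (ω i ^ 2) • fproj (W i) (hW i) x) (S x))
    (hSinv : S ∘L Sinv = 1 ∧ Sinv ∘L S = 1) :
    -- (1) (V,υ) is a fusion frame dual of (W,ω)
    ((∃ Q : I → H →L[ℂ] H, Admissible V W Q ∧
        ∃ M : H →L[ℂ] H,
          (∀ x : H, HasSum
            (fun i => (υ i * ω i) • fproj (V i) (hV i) ((Q i) (fproj (W i) (hW i) x))) (M x)) ∧
          ∃ N : H →L[ℂ] H, M ∘L N = 1 ∧ N ∘L M = 1) ↔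
    -- (2) there is an admissible sequence Q with {υ_i Q_i*} an operator-valued Bessel sequence
    --     and x ↦ Σ_i υ_i ω_i Q_i P_{W_i} x invertible
      (∃ Q : I → H →L[ℂ] H, Admissible V W Q ∧
        (∃ βQ : ℝ, ∀ x : H, ∃ s : ℝ,
          HasSum (fun i => ‖υ i • (ContinuousLinearMap.adjoint (Q i)) x‖ ^ 2) s ∧
          s ≤ βQ * ‖x‖ ^ 2) ∧
        ∃ M : H →L[ℂ] H,
          (∀ x : H, HasSum (fun i => (υ i * ω i) • (Q i) (fproj (W i) (hW i) x)) (M x)) ∧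
          ∃ N : H →L[ℂ] H, M ∘L N = 1 ∧ N ∘L M = 1)) ∧
    -- (1) ↔ (3)
    ((∃ Q : I → H →L[ℂ] H, Admissible V W Q ∧
        ∃ M : H →L[ℂ] H,
          (∀ x : H, HasSum
            (fun i => (υ i * ω i) • fproj (V i) (hV i) ((Q i) (fproj (W i) (hW i) x))) (M x)) ∧
          ∃ N : H →L[ℂ] H, M ∘L N = 1 ∧ N ∘L M = 1) ↔
      (∃ L : I → H →L[ℂ] H,
        (∃ βL : ℝ, ∀ x : H, ∃ s : ℝ,
          HasSum (fun i => ‖L i x‖ ^ 2) s ∧ s ≤ βL * ‖x‖ ^ 2) ∧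
        (∀ x : H, HasSum
          (fun i => ω i • (ContinuousLinearMap.adjoint (L i)) (fproj (W i) (hW i) x)) (0 : H)) ∧
        ∃ U : H →L[ℂ] H, (∃ Uinv : H →L[ℂ] H, U ∘L Uinv = 1 ∧ Uinv ∘L U = 1) ∧
          (∀ i, LinearMap.range
              ((((ω i • (U ∘L Sinv)) + ContinuousLinearMap.adjoint (L i)) ∘L fproj (W i) (hW i) :
                H →ₗ[ℂ] H))
            ≤ V i) ∧
          (∀ i, ¬(V i = ⊥ ∨ W i = ⊥) →
            ‖((ω i • (U ∘L Sinv)) + ContinuousLinearMap.adjoint (L i)) ∘L fproj (W i) (hW i)‖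
              = υ i))) := by
  have hVBessel : IsBesselSeq (fun i => υ i • fproj (V i) (hV i)) :=
    (isBesselSeq_smul_iff υ _).2 ⟨βV, hVB⟩
  have hWBessel : IsBesselSeq (fun i => ω i • fproj (W i) (hW i)) :=
    (isBesselSeq_smul_iff ω _).2 ⟨βW, fun x => (hWframe x).imp fun _ ⟨hs, _, hsβ⟩ => ⟨hs, hsβ⟩⟩
  refine ⟨isFusionFrameDual_iff_exists_isBesselSeq hVBessel,
    IsFusionFrameDual.exists_perturbation (fun i => (hυseq i).1) hVBessel hWBessel hS hSinv.2, ?_⟩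
  rintro ⟨L, -, hL, U, hU, hran, hnorm⟩
  exact isFusionFrameDual_of_perturbation (fun i => (hυseq i).2.1) hS hSinv.2 hL hU hran hnorm

/-- Proposition 2 of the paper: characterizations of fusion frame duals. -/
theorem fusionFrameDual_tfae
    {H : Type*} [NormedAddCommGroup H] [InnerProductSpace ℂ H] [CompleteSpace H]
    [TopologicalSpace.SeparableSpace H]
    {I : Type*} [Countable I]
    (W V : I → Submodule ℂ H)
    (hW : ∀ i, IsClosed ((W i) : Set H)) (hV : ∀ i, IsClosed ((V i) : Set H))
    (ω υ : I → ℝ)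
    (hωseq : ∀ i, 0 ≤ ω i ∧ (ω i = 0 ↔ W i = ⊥))
    (hυseq : ∀ i, 0 ≤ υ i ∧ (υ i = 0 ↔ V i = ⊥))
    -- (W,ω) is a fusion frame
    (αW βW : ℝ) (hαW : 0 < αW)
    (hWframe : ∀ x : H, ∃ s : ℝ,
      HasSum (fun i => ω i ^ 2 * ‖fproj (W i) (hW i) x‖ ^ 2) s ∧
      αW * ‖x‖ ^ 2 ≤ s ∧ s ≤ βW * ‖x‖ ^ 2)
    -- (V,υ) is a Bessel fusion sequence
    (βV : ℝ)
    (hVB : ∀ x : H, ∃ s : ℝ,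
      HasSum (fun i => υ i ^ 2 * ‖fproj (V i) (hV i) x‖ ^ 2) s ∧ s ≤ βV * ‖x‖ ^ 2)
    -- the fusion frame operator S_{W,ω} and its inverse
    (S Sinv : H →L[ℂ] H)
    (hS : ∀ x : H, HasSum (fun i => (ω i ^ 2) • fproj (W i) (hW i) x) (S x))
    (hSinv : S ∘L Sinv = 1 ∧ Sinv ∘L S = 1) :
    -- (1) (V,υ) is a fusion frame dual of (W,ω)
    ((∃ Q : I → H →L[ℂ] H, Admissible V W Q ∧
        ∃ M : H →L[ℂ] H,
          (∀ x : H, HasSum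
            (fun i => (υ i * ω i) • fproj (V i) (hV i) ((Q i) (fproj (W i) (hW i) x))) (M x)) ∧
          ∃ N : H →L[ℂ] H, M ∘L N = 1 ∧ N ∘L M = 1) ↔
    -- (2) there is an admissible sequence Q with {υ_i Q_i*} an operator-valued Bessel sequence
    --     and x ↦ Σ_i υ_i ω_i Q_i P_{W_i} x invertible
      (∃ Q : I → H →L[ℂ] H, Admissible V W Q ∧
        (∃ βQ : ℝ, ∀ x : H, ∃ s : ℝ,
          HasSum (fun i => ‖υ i • (ContinuousLinearMap.adjoint (Q i)) x‖ ^ 2) s ∧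
          s ≤ βQ * ‖x‖ ^ 2) ∧
        ∃ M : H →L[ℂ] H,
          (∀ x : H, HasSum (fun i => (υ i * ω i) • (Q i) (fproj (W i) (hW i) x)) (M x)) ∧
          ∃ N : H →L[ℂ] H, M ∘L N = 1 ∧ N ∘L M = 1)) ∧
    -- (1) ↔ (3)
    ((∃ Q : I → H →L[ℂ] H, Admissible V W Q ∧
        ∃ M : H →L[ℂ] H,
          (∀ x : H, HasSum
            (fun i => (υ i * ω i) • fproj (V i) (hV i) ((Q i) (fproj (W i) (hW i) x))) (M x)) ∧
          ∃ N : H →L[ℂ] H, M ∘L N = 1 ∧ N ∘L M = 1) ↔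
      (∃ L : I → H →L[ℂ] H,
        (∃ βL : ℝ, ∀ x : H, ∃ s : ℝ,
          HasSum (fun i => ‖L i x‖ ^ 2) s ∧ s ≤ βL * ‖x‖ ^ 2) ∧
        (∀ x : H, HasSum
          (fun i => ω i • (ContinuousLinearMap.adjoint (L i)) (fproj (W i) (hW i) x)) (0 : H)) ∧
        ∃ U : H →L[ℂ] H, (∃ Uinv : H →L[ℂ] H, U ∘L Uinv = 1 ∧ Uinv ∘L U = 1) ∧
          (∀ i, LinearMap.range
              ((((ω i • (U ∘L Sinv)) + ContinuousLinearMap.adjoint (L i)) ∘L fproj (W i) (hW i) :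
                H →ₗ[ℂ] H))
            ≤ V i) ∧
          (∀ i, ¬(V i = ⊥ ∨ W i = ⊥) →
            ‖((ω i • (U ∘L Sinv)) + ContinuousLinearMap.adjoint (L i)) ∘L fproj (W i) (hW i)‖
              = υ i))) :=
  fusionFrameDual_tfae_general W V hW hV ω υ hυseq αW βW hWframe βV hVB S Sinv hS hSinv
end
end

section
/- Let m ∈ c₀(I) (i.e. for every ε > 0 there is a finite set J ⊆ I with |m_i| < ε for all i ∉ J) and let R ∈ ℓ∞(I,B(H)) be such that every R_i has finite rank and sup_{i∈I} rank(R_i) < ∞. Then the diagonal operator D_{mR} : 𝔥 → 𝔥 is compact; in particular, for any Bessel fusion sequences (W,ω) and (V,υ) the Bessel fusion multiplier M_{mR,V,W} is a compact operator on H. -/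
/-!
`D_{mR}` is the operator-norm limit of its finite sections `∑_{i ∈ F} e_i m_i R_i e_i^*`: these
have finite rank, and `‖D_{mR} - D_F‖ ≤ sup_{i ∉ F} |m_i| ‖R_i‖ → 0` because `m ∈ c₀` and `R` is
bounded. Compact operators form a closed set, so `D_{mR}` is compact. The multiplier factors as
`M_{mR,V,W} = T*_{V,υ} D_{mR} T_{W,ω}` through the analysis operators, which are bounded by the
closed graph theorem, so it is compact too.
-/

noncomputable section

open ContinuousLinearMap

open Filter Topology
open scoped ENNReal InnerProduct

section FiniteRank

variable {𝕜 : Type*} [NontriviallyNormedField 𝕜] [ProperSpace 𝕜]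
  {E F : Type*} [NormedAddCommGroup E] [NormedSpace 𝕜 E] [NormedAddCommGroup F] [NormedSpace 𝕜 F]

theorem ContinuousLinearMap.isCompactOperator_of_finiteDimensional_range (f : E →L[𝕜] F)
    [FiniteDimensional 𝕜 (LinearMap.range (f : E →ₗ[𝕜] F))] : IsCompactOperator f :=
  have : ProperSpace (LinearMap.range (f : E →ₗ[𝕜] F)) := FiniteDimensional.proper 𝕜 _
  (isCompactOperator_of_locallyCompactSpace_dom (f.rangeRestrict)).clm_comp
    (LinearMap.range (f : E →ₗ[𝕜] F)).subtypeL

end FiniteRank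

theorem tendsto_cofinite_zero_of_forall_exists_finset {I E : Type*} [SeminormedAddCommGroup E]
    {m : I → E} (hm : ∀ ε : ℝ, 0 < ε → ∃ F : Finset I, ∀ i ∉ F, ‖m i‖ < ε) :
    Tendsto m cofinite (𝓝 0) := by
  refine Metric.tendsto_nhds.2 fun ε hε => ?_
  obtain ⟨F, hF⟩ := hm ε hε
  refine eventually_cofinite.2 (F.finite_toSet.subset fun i hi => ?_)
  by_contra hiF
  exact hi (by simpa using hF i hiF)

section Diagonal

variable {𝕜 : Type*} [RCLike 𝕜] {E F : Type*} [NormedAddCommGroup E] [NormedSpace 𝕜 E]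
  [NormedAddCommGroup F] [NormedSpace 𝕜 F] {I : Type*} {p : ℝ≥0∞} [Fact (1 ≤ p)]

section Trunc

variable [DecidableEq I]

variable (p) in
def lpDiagonalTrunc (A : I → E →L[𝕜] F) (s : Finset I) :
    lp (fun _ : I => E) p →L[𝕜] lp (fun _ : I => F) p :=
  ∑ i ∈ s, lp.singleContinuousLinearMap 𝕜 (fun _ : I => F) p i ∘L A i ∘L
    lp.evalCLM 𝕜 (fun _ : I => E) p i

theorem lpDiagonalTrunc_apply (A : I → E →L[𝕜] F) (s : Finset I)
    (x : lp (fun _ : I => E) p) (j : I) :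
    lpDiagonalTrunc p A s x j = if j ∈ s then A j (x j) else 0 := by
  simp only [lpDiagonalTrunc, sum_apply, lp.coeFn_sum, Finset.sum_apply, comp_apply,
    lp.singleContinuousLinearMap_apply, lp.single_apply, Finset.sum_pi_single]
  rfl

theorem isCompactOperator_lpDiagonalTrunc {A : I → E →L[𝕜] F}
    (hA : ∀ i, IsCompactOperator (A i)) (s : Finset I) :
    IsCompactOperator (lpDiagonalTrunc p A s) :=
  Submodule.sum_mem (compactOperator (RingHom.id 𝕜) _ _) fun i _ =>
    ((hA i).comp_clm (lp.evalCLM 𝕜 (fun _ : I => E) p i)).clm_comp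
      (lp.singleContinuousLinearMap 𝕜 (fun _ : I => F) p i)

theorem tendsto_lpDiagonalTrunc {A : I → E →L[𝕜] F} (hA : Tendsto A cofinite (𝓝 0))
    {D : lp (fun _ : I => E) p →L[𝕜] lp (fun _ : I => F) p}
    (hD : ∀ x i, D x i = A i (x i)) :
    Tendsto (lpDiagonalTrunc p A) atTop (𝓝 D) := by
  refine Metric.tendsto_nhds.2 fun ε hε => ?_
  have hsmall : {i | ¬ ‖A i‖ < ε / 2}.Finite :=
    eventually_cofinite.1 (by simpa using Metric.tendsto_nhds.1 hA (ε / 2) (half_pos hε))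
  filter_upwards [eventually_ge_atTop hsmall.toFinset] with s hs
  refine (dist_eq_norm _ _).trans_lt (lt_of_le_of_lt ?_ (half_lt_self hε))
  refine opNorm_le_bound _ (half_pos hε).le fun x => ?_
  have hcoord : ∀ j, ‖(lpDiagonalTrunc p A s - D) x j‖ ≤ ‖((ε / 2 : ℝ) : 𝕜) • x j‖ := by
    intro j
    rw [sub_apply, lp.coeFn_sub, Pi.sub_apply, lpDiagonalTrunc_apply, hD, norm_smul,
      RCLike.norm_ofReal, abs_of_pos (half_pos hε)]
    split_ifs with hj
    · rw [sub_self, norm_zero]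
      positivity
    · have hAj : ‖A j‖ ≤ ε / 2 := not_lt.1 fun h => hj (hs (by simpa using h.le))
      rw [zero_sub, norm_neg]
      exact (A j).le_of_opNorm_le hAj (x j)
  calc ‖(lpDiagonalTrunc p A s - D) x‖ ≤ ‖((ε / 2 : ℝ) : 𝕜) • x‖ :=
        lp.norm_mono (zero_lt_one.trans_le Fact.out).ne' hcoord
    _ = ε / 2 * ‖x‖ := by rw [norm_smul, RCLike.norm_ofReal, abs_of_pos (half_pos hε)]

end Trunc

theorem isCompactOperator_of_lpDiagonal [CompleteSpace F] {A : I → E →L[𝕜] F}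
    (hA : ∀ i, IsCompactOperator (A i)) (hA₀ : Tendsto A cofinite (𝓝 0))
    {D : lp (fun _ : I => E) p →L[𝕜] lp (fun _ : I => F) p}
    (hD : ∀ x i, D x i = A i (x i)) :
    IsCompactOperator D := by
  classical
  exact isCompactOperator_of_tendsto (tendsto_lpDiagonalTrunc hA₀ hD)
    (Eventually.of_forall (isCompactOperator_lpDiagonalTrunc hA))

end Diagonal

section Analysis

variable {𝕜 : Type*} [RCLike 𝕜] {I : Type*}

section Banach

variable {E G : Type*} [NormedAddCommGroup E] [NormedSpace 𝕜 E] [CompleteSpace E]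
  [NormedAddCommGroup G] [NormedSpace 𝕜 G] [CompleteSpace G] {p : ℝ≥0∞} [Fact (1 ≤ p)]

def analysisOp (P : I → E →L[𝕜] G) (hP : ∀ x, Memℓp (fun i => P i x) p) :
    E →L[𝕜] lp (fun _ : I => G) p :=
  let T : E →ₗ[𝕜] lp (fun _ : I => G) p :=
    { toFun := fun x => ⟨fun i => P i x, hP x⟩
      map_add' := fun x y => lp.ext (funext fun i => map_add (P i) x y)
      map_smul' := fun c x => lp.ext (funext fun i => map_smul (P i) c x) }
  ⟨T, T.continuous_of_seq_closed_graph fun _ x y hu hy => lp.ext <| funext fun i =>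
    tendsto_nhds_unique (((lp.evalCLM 𝕜 (fun _ : I => G) p i).continuous.tendsto y).comp hy)
      (((P i).continuous.tendsto x).comp hu)⟩

@[simp]
theorem analysisOp_apply (P : I → E →L[𝕜] G) (hP : ∀ x, Memℓp (fun i => P i x) p) (x : E)
    (i : I) : analysisOp P hP x i = P i x :=
  rfl

end Banach

section Hilbert

variable {E G : Type*} [NormedAddCommGroup E] [InnerProductSpace 𝕜 E] [CompleteSpace E]
  [NormedAddCommGroup G] [InnerProductSpace 𝕜 G] [CompleteSpace G]

theorem adjoint_analysisOp_single [DecidableEq I] (P : I → E →L[𝕜] G) (hP : ∀ x, Memℓp (fun i => P i x) 2)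
    (i : I) (a : G) : ((analysisOp P hP)†) (lp.single 2 i a) = ((P i)†) a :=
  ext_inner_right 𝕜 fun z => by
    rw [adjoint_inner_left, adjoint_inner_left, lp.inner_single_left, analysisOp_apply]

theorem hasSum_adjoint_analysisOp (P : I → E →L[𝕜] G) (hP : ∀ x, Memℓp (fun i => P i x) 2)
    (y : lp (fun _ : I => G) 2) : HasSum (fun i => ((P i)†) (y i)) (((analysisOp P hP)†) y) := by
  classical
  simpa only [adjoint_analysisOp_single] using
    ((analysisOp P hP)†).hasSum (lp.hasSum_single ENNReal.ofNat_ne_top y)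

end Hilbert

end Analysis

theorem memℓp_two_ofReal_smul_of_hasSum {𝕜 E G I : Type*} [RCLike 𝕜] [NormedAddCommGroup E]
    [NormedSpace 𝕜 E] [NormedAddCommGroup G] [NormedSpace 𝕜 G] {P : I → E →L[𝕜] G}
    {c : I → ℝ} {x : E} {s : ℝ} (hs : HasSum (fun i => c i ^ 2 * ‖P i x‖ ^ 2) s) :
    Memℓp (fun i => ((c i : 𝕜) • P i) x) 2 :=
  memℓp_gen <| hs.summable.congr fun i => by
    simp [norm_smul, mul_pow]

theorem adjoint_ofReal_smul_fproj {H : Type*} [NormedAddCommGroup H] [InnerProductSpace ℂ H]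
    [CompleteSpace H] (c : ℝ) (U : Submodule ℂ H) (hU : IsClosed (U : Set H)) :
    ((c : ℂ) • fproj U hU)† = (c : ℂ) • fproj U hU := by
  have : CompleteSpace U := hU.completeSpace_coe
  rw [map_smulₛₗ, Complex.conj_ofReal]
  exact congrArg _ (isSelfAdjoint_starProjection U)

theorem fusionMultiplier_eq_adjoint_analysisOp_comp {H I : Type*} [NormedAddCommGroup H]
    [InnerProductSpace ℂ H] [CompleteSpace H] {m : I → ℂ} {R : I → H →L[ℂ] H}
    {D : lp (fun _ : I => H) 2 →L[ℂ] lp (fun _ : I => H) 2}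
    (hD : ∀ x i, D x i = m i • (R i) (x i)) {W V : I → Submodule ℂ H}
    {hW : ∀ i, IsClosed ((W i) : Set H)} {hV : ∀ i, IsClosed ((V i) : Set H)} {ω υ : I → ℝ}
    (hWmem : ∀ x, Memℓp (fun i => ((ω i : ℂ) • fproj (W i) (hW i)) x) 2)
    (hVmem : ∀ x, Memℓp (fun i => ((υ i : ℂ) • fproj (V i) (hV i)) x) 2) {M : H →L[ℂ] H}
    (hM : ∀ x, HasSum
      (fun i => m i • (υ i * ω i) • fproj (V i) (hV i) ((R i) (fproj (W i) (hW i) x))) (M x)) :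
    M = (analysisOp _ hVmem)† ∘L D ∘L analysisOp _ hWmem := by
  ext x
  refine (hM x).unique ?_
  convert hasSum_adjoint_analysisOp _ hVmem (D (analysisOp _ hWmem x)) using 2 with i
  · simp only [adjoint_ofReal_smul_fproj, hD, analysisOp_apply, smul_apply, map_smul,
      smul_smul, ← Complex.coe_smul]
    congr 1
    push_cast
    ring
  · rfl

theorem multiplier_compact_of_c0_symbol_general
    {H : Type*} [NormedAddCommGroup H] [InnerProductSpace ℂ H] [CompleteSpace H]
    {I : Type*}
    (m : I → ℂ)
    (hm : ∀ ε : ℝ, 0 < ε → ∃ F : Finset I, ∀ i ∉ F, ‖m i‖ < ε)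
    (R : I → H →L[ℂ] H) (hR : BddAbove (Set.range fun i => ‖R i‖))
    (hfin : ∀ i, FiniteDimensional ℂ ↥(LinearMap.range (R i : H →ₗ[ℂ] H)))
    -- the diagonal operator D_{mR}
    (D : lp (fun _ : I => H) 2 →L[ℂ] lp (fun _ : I => H) 2)
    (hD : ∀ (x : lp (fun _ : I => H) 2) (i : I), D x i = m i • (R i) (x i)) :
    IsCompactOperator ⇑D ∧
    -- and every (m,R)-Bessel fusion multiplier is compact
    (∀ (W V : I → Submodule ℂ H)
      (hW : ∀ i, IsClosed ((W i) : Set H)) (hV : ∀ i, IsClosed ((V i) : Set H))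
      (ω υ : I → ℝ),
      (∀ i, 0 ≤ ω i ∧ (ω i = 0 ↔ W i = ⊥)) →
      (∀ i, 0 ≤ υ i ∧ (υ i = 0 ↔ V i = ⊥)) →
      (∃ βW : ℝ, ∀ x : H, ∃ s : ℝ,
        HasSum (fun i => ω i ^ 2 * ‖fproj (W i) (hW i) x‖ ^ 2) s ∧ s ≤ βW * ‖x‖ ^ 2) →
      (∃ βV : ℝ, ∀ x : H, ∃ s : ℝ,
        HasSum (fun i => υ i ^ 2 * ‖fproj (V i) (hV i) x‖ ^ 2) s ∧ s ≤ βV * ‖x‖ ^ 2) →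
      ∀ M : H →L[ℂ] H,
        (∀ x : H, HasSum
          (fun i => m i • (υ i * ω i) • fproj (V i) (hV i) ((R i) (fproj (W i) (hW i) x)))
          (M x)) →
        IsCompactOperator ⇑M) := by
  have hmR : Tendsto (fun i => m i • R i) cofinite (𝓝 0) :=
    (tendsto_cofinite_zero_of_forall_exists_finset hm).zero_smul_isBoundedUnder_le
      hR.isBoundedUnder_of_range
  have hDc : IsCompactOperator D := isCompactOperator_of_lpDiagonal
    (fun i => have := hfin i; ((R i).isCompactOperator_of_finiteDimensional_range).smul (m i))
    hmR hD
  refine ⟨hDc, fun W V hW hV ω υ _ _ ⟨_, hβW⟩ ⟨_, hβV⟩ M hM => ?_⟩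
  have hWmem : ∀ x, Memℓp (fun i => ((ω i : ℂ) • fproj (W i) (hW i)) x) 2 := fun x =>
    let ⟨_, hs, _⟩ := hβW x; memℓp_two_ofReal_smul_of_hasSum hs
  have hVmem : ∀ x, Memℓp (fun i => ((υ i : ℂ) • fproj (V i) (hV i)) x) 2 := fun x =>
    let ⟨_, hs, _⟩ := hβV x; memℓp_two_ofReal_smul_of_hasSum hs
  rw [fusionMultiplier_eq_adjoint_analysisOp_comp hD hWmem hVmem hM]
  exact (hDc.comp_clm (analysisOp _ hWmem)).clm_comp ((analysisOp _ hVmem)†)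

/-- if `m ∈ c₀(I)` and `R ∈ ℓ∞(I,B(H))` consists of finite-rank operators of
uniformly bounded rank, then `D_{mR}` is compact and every `(m,R)`-Bessel fusion multiplier
`M_{mR,V,W}` is compact. -/
theorem multiplier_compact_of_c0_symbol
    {H : Type*} [NormedAddCommGroup H] [InnerProductSpace ℂ H] [CompleteSpace H]
    [TopologicalSpace.SeparableSpace H]
    {I : Type*} [Countable I]
    (m : I → ℂ)
    (hm : ∀ ε : ℝ, 0 < ε → ∃ F : Finset I, ∀ i ∉ F, ‖m i‖ < ε)
    (R : I → H →L[ℂ] H) (hR : BddAbove (Set.range fun i => ‖R i‖))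
    (hfin : ∀ i, FiniteDimensional ℂ ↥(LinearMap.range (R i : H →ₗ[ℂ] H)))
    (n : ℕ) (hrank : ∀ i, Module.finrank ℂ ↥(LinearMap.range (R i : H →ₗ[ℂ] H)) ≤ n)
    -- the diagonal operator D_{mR}
    (D : lp (fun _ : I => H) 2 →L[ℂ] lp (fun _ : I => H) 2)
    (hD : ∀ (x : lp (fun _ : I => H) 2) (i : I), D x i = m i • (R i) (x i)) :
    IsCompactOperator ⇑D ∧
    -- and every (m,R)-Bessel fusion multiplier is compact
    (∀ (W V : I → Submodule ℂ H)
      (hW : ∀ i, IsClosed ((W i) : Set H)) (hV : ∀ i, IsClosed ((V i) : Set H))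
      (ω υ : I → ℝ),
      (∀ i, 0 ≤ ω i ∧ (ω i = 0 ↔ W i = ⊥)) →
      (∀ i, 0 ≤ υ i ∧ (υ i = 0 ↔ V i = ⊥)) →
      (∃ βW : ℝ, ∀ x : H, ∃ s : ℝ,
        HasSum (fun i => ω i ^ 2 * ‖fproj (W i) (hW i) x‖ ^ 2) s ∧ s ≤ βW * ‖x‖ ^ 2) →
      (∃ βV : ℝ, ∀ x : H, ∃ s : ℝ,
        HasSum (fun i => υ i ^ 2 * ‖fproj (V i) (hV i) x‖ ^ 2) s ∧ s ≤ βV * ‖x‖ ^ 2) →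
      ∀ M : H →L[ℂ] H,
        (∀ x : H, HasSum
          (fun i => m i • (υ i * ω i) • fproj (V i) (hV i) ((R i) (fproj (W i) (hW i) x)))
          (M x)) →
        IsCompactOperator ⇑M) :=
  multiplier_compact_of_c0_symbol_general m hm R hR hfin D hD
end
end
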